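/- For every θ ∈ (0,1) there exist constants C = C(θ) > 0 and δ₀ = δ₀(θ) > 0 with the following property: if 0 < δ ≤ δ₀ and (I, ψ, m) satisfy the centering condition m((-∞, a_θ] ∩ I) = θ and the δ-deficit condition e^{-ψ(a_θ)} ≤ e^{-ψ_g(a_θ)} + δ, then |ψ'_+(a_θ) − a_θ| ≤ C·δ, where ψ'_+(a_θ) denotes the right derivative of ψ at a_θ. -/

import Mathlib

open MeasureTheory Real Set

/-- `gaussPsi x = x²/2 + (1/2)·log(2π)`, so that the standard Gaussian measure
is `exp (-gaussPsi x) dx`. -/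
noncomputable def gaussPsi (x : ℝ) : ℝ := x ^ 2 / 2 + Real.log (2 * π) / 2

/-- The standard Gaussian measure `γ(dx) = (2π)^{-1/2} exp(-x²/2) dx` on `ℝ`. -/
noncomputable def gauss : Measure ℝ :=
  MeasureTheory.volume.withDensity fun x => ENNReal.ofReal (Real.exp (-gaussPsi x))

/-!
Since `ψ - x²/2` is convex, `ψ` lies above the parabola tangent to it at `a` from the right:
`ψ x ≥ ψ a + p (x - a) + (x - a)²/2` with `p = ψ'₊(a)`. Hence `m` is dominated by the measure
with density `e^{-ψ(a)} e^{-p(x-a) - (x-a)²/2}`, and `γ` is exactly this measure for `ψ = ψ_g`,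
`p = a`. The two tails of such a measure at `a` are Mills ratios `R(±p)`, with
`R(s) = ∫_0^∞ e^{-st - t²/2} dt`, so the centering condition gives
`e^{-ψ_g(a)} R(a) = 1 - θ ≤ e^{-ψ(a)} R(p)` and `e^{-ψ_g(a)} R(-a) = θ ≤ e^{-ψ(a)} R(-p)`.
As `R` is decreasing at a rate bounded below near `±a`, the deficit bound
`e^{-ψ(a)} ≤ e^{-ψ_g(a)} + δ` forces `|p - a| = O(δ)`.
-/

noncomputable def millsKernel (s t : ℝ) : ℝ := rexp (-(s * t) - t ^ 2 / 2)

/-- `millsRatio s = e^{s²/2} ∫_s^∞ e^{-u²/2} du` is the Mills ratio of the standard normal law. -/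
noncomputable def millsRatio (s : ℝ) : ℝ := ∫ t in Ioi 0, millsKernel s t

noncomputable def truncatedFirstMoment (s : ℝ) : ℝ := ∫ t in (0:ℝ)..1, t * millsKernel s t

lemma millsKernel_pos (s t : ℝ) : 0 < millsKernel s t := exp_pos _

lemma millsKernel_add (s q t : ℝ) : millsKernel (s + q) t = millsKernel s t * rexp (-(q * t)) := by
  rw [millsKernel, millsKernel, ← exp_add]; ring_nf

lemma continuous_millsKernel (s : ℝ) : Continuous (millsKernel s) := by
  unfold millsKernel; fun_prop

lemma integrable_millsKernel (s : ℝ) : Integrable (millsKernel s) := by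
  have h := ((integrable_exp_neg_mul_sq (b := 1 / 2) (by norm_num)).comp_add_right s).const_mul
    (rexp (s ^ 2 / 2))
  refine h.congr (ae_of_all _ fun t => ?_)
  simp only [millsKernel, ← exp_add]; ring_nf

lemma truncatedFirstMoment_pos (s : ℝ) : 0 < truncatedFirstMoment s :=
  intervalIntegral.intervalIntegral_pos_of_pos_on
    ((continuous_id.mul (continuous_millsKernel s)).intervalIntegrable 0 1)
    (fun t ht => mul_pos ht.1 (millsKernel_pos s t)) one_pos

lemma div_one_add_mul_le_one_sub_exp {q t : ℝ} (hq : 0 ≤ q) (ht₀ : 0 ≤ t) (ht₁ : t ≤ 1) :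
    q / (1 + q) * t ≤ 1 - rexp (-(q * t)) := by
  have hqt : 0 ≤ q * t := mul_nonneg hq ht₀
  have hexp : rexp (-(q * t)) * (1 + q * t) ≤ 1 := by
    calc rexp (-(q * t)) * (1 + q * t) ≤ rexp (-(q * t)) * rexp (q * t) := by
          gcongr; linarith [add_one_le_exp (q * t)]
      _ = 1 := by rw [← exp_add, neg_add_cancel, exp_zero]
  rw [div_mul_eq_mul_div, div_le_iff₀ (by linarith)]
  -- `qt / (1 + q) ≤ qt / (1 + qt) ≤ 1 - e^{-qt}`
  nlinarith [exp_pos (-(q * t)), mul_le_mul_of_nonneg_left ht₁ hqt]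

lemma mul_truncatedFirstMoment_le_millsRatio_sub {q : ℝ} (hq : 0 ≤ q) (s : ℝ) :
    q / (1 + q) * truncatedFirstMoment s ≤ millsRatio s - millsRatio (s + q) := by
  have hint : Integrable fun t => millsKernel s t - millsKernel (s + q) t :=
    (integrable_millsKernel s).sub (integrable_millsKernel (s + q))
  have hdiff (t : ℝ) : millsKernel s t - millsKernel (s + q) t
      = millsKernel s t * (1 - rexp (-(q * t))) := by
    rw [millsKernel_add]; ring
  calc q / (1 + q) * truncatedFirstMoment s
      = ∫ t in Ioc 0 1, q / (1 + q) * (t * millsKernel s t) := by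
        rw [truncatedFirstMoment, intervalIntegral.integral_of_le zero_le_one, integral_const_mul]
    _ ≤ ∫ t in Ioc 0 1, (millsKernel s t - millsKernel (s + q) t) := by
        refine setIntegral_mono_on
          ((continuous_const.mul (continuous_id.mul (continuous_millsKernel s))).integrableOn_Ioc)
          hint.integrableOn measurableSet_Ioc fun t ht => ?_
        rw [hdiff, ← mul_assoc, mul_comm _ t, mul_comm]
        gcongr
        · exact (millsKernel_pos s t).le
        · linarith [div_one_add_mul_le_one_sub_exp hq ht.1.le ht.2]
    _ ≤ ∫ t in Ioi 0, (millsKernel s t - millsKernel (s + q) t) := by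
        refine setIntegral_mono_set hint.integrableOn
          (ae_restrict_of_forall_mem measurableSet_Ioi fun t (ht : 0 < t) => ?_)
          (Ioc_subset_Ioi_self.eventuallyLE)
        simp only [Pi.zero_apply, hdiff]
        have : rexp (-(q * t)) ≤ 1 := exp_le_one_iff.2 (by nlinarith)
        exact mul_nonneg (millsKernel_pos s t).le (by linarith)
    _ = millsRatio s - millsRatio (s + q) :=
        integral_sub (integrable_millsKernel s).integrableOn
          (integrable_millsKernel (s + q)).integrableOn

lemma millsRatio_pos (s : ℝ) : 0 < millsRatio s := by
  have hdrop := mul_truncatedFirstMoment_le_millsRatio_sub zero_le_one s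
  have hnonneg : 0 ≤ millsRatio (s + 1) :=
    setIntegral_nonneg measurableSet_Ioi fun t _ => (millsKernel_pos _ t).le
  nlinarith [truncatedFirstMoment_pos s]

lemma integral_Ioi_millsKernel_sub (p a : ℝ) :
    ∫ x in Ioi a, millsKernel p (x - a) = millsRatio p := by
  simpa [millsRatio] using (measurePreserving_sub_right volume a).setIntegral_preimage_emb
    (measurableEmbedding_subRight a) (millsKernel p) (Ioi 0)

lemma integral_Iic_millsKernel_sub (p a : ℝ) :
    ∫ x in Iic a, millsKernel p (x - a) = millsRatio (-p) := by
  have h := (measurePreserving_sub_right volume a).setIntegral_preimage_emb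
    (measurableEmbedding_subRight a) (millsKernel p) (Iic 0)
  simp only [preimage_sub_const_Iic, zero_add] at h
  rw [h, ← neg_zero, ← integral_comp_neg_Ioi, millsRatio]
  congr 1 with t
  simp only [millsKernel]; ring_nf

lemma ConvexOn.add_rightDeriv_mul_sub_le {s : Set ℝ} {f : ℝ → ℝ} (hf : ConvexOn ℝ s f) {x y : ℝ}
    (hx : x ∈ interior s) (hy : y ∈ s) : f x + derivWithin f (Ioi x) x * (y - x) ≤ f y := by
  rcases lt_trichotomy y x with hyx | rfl | hxy
  · have hslope := (hf.slope_le_leftDeriv_of_mem_interior hy hx hyx).trans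
      (hf.leftDeriv_le_rightDeriv_of_mem_interior hx)
    rw [slope_def_field, div_le_iff₀ (sub_pos.2 hyx)] at hslope
    linarith
  · simp
  · have hslope := hf.rightDeriv_le_slope_of_mem_interior hx hy hxy
    rw [slope_def_field, le_div_iff₀ (sub_pos.2 hxy)] at hslope
    linarith

lemma StrongConvexOn.add_rightDeriv_mul_sub_add_le {s : Set ℝ} {m : ℝ} {f : ℝ → ℝ}
    (hf : StrongConvexOn s m f) {x y : ℝ} (hx : x ∈ interior s) (hy : y ∈ s) :
    f x + derivWithin f (Ioi x) x * (y - x) + m / 2 * (y - x) ^ 2 ≤ f y := by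
  set φ := fun z : ℝ => f z - m / 2 * ‖z‖ ^ 2
  have hφ : ConvexOn ℝ s φ := strongConvexOn_iff_convex.mp hf
  have hsq : HasDerivWithinAt (fun z : ℝ => m / 2 * ‖z‖ ^ 2) (m * x) (Ioi x) x := by
    simp only [Real.norm_eq_abs, sq_abs]
    exact ((hasDerivAt_pow 2 x).const_mul (m / 2)).hasDerivWithinAt.congr_deriv (by norm_num; ring)
  have hderiv : derivWithin f (Ioi x) x = derivWithin φ (Ioi x) x + m * x := by
    have hf' := (hφ.hasDerivWithinAt_rightDeriv_of_mem_interior hx).add hsq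
    rw [show φ + (fun z : ℝ => m / 2 * ‖z‖ ^ 2) = f by ext; simp [φ]] at hf'
    exact hf'.derivWithin (uniqueDiffWithinAt_Ioi x)
  have hline := hφ.add_rightDeriv_mul_sub_le hx hy
  have hφx : φ x = f x - m / 2 * x ^ 2 := by simp [φ]
  have hφy : φ y = f y - m / 2 * y ^ 2 := by simp [φ]
  rw [hderiv]
  linarith

lemma strongConvexOn_of_forall_mem_Ioo {s : Set ℝ} {m : ℝ} {f : ℝ → ℝ} (hs : Convex ℝ s)
    (hf : ∀ x ∈ s, ∀ y ∈ s, ∀ t ∈ Ioo (0:ℝ) 1,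
      f ((1 - t) * x + t * y) ≤ (1 - t) * f x + t * f y - m / 2 * (1 - t) * t * |x - y| ^ 2) :
    StrongConvexOn s m f := by
  refine ⟨hs, fun x hx y hy a b ha hb hab => ?_⟩
  obtain rfl : a = 1 - b := by linarith
  simp only [smul_eq_mul, Real.norm_eq_abs]
  rcases hb.eq_or_lt with rfl | hb₀
  · simp
  rcases (show b ≤ 1 by linarith).eq_or_lt with rfl | hb₁
  · simp
  linarith [hf x hx y hy b ⟨hb₀, hb₁⟩]

noncomputable def tangentGaussian (E p a : ℝ) : Measure ℝ :=
  volume.withDensity fun x => ENNReal.ofReal (E * millsKernel p (x - a))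

lemma tangentGaussian_Ioi {E : ℝ} (hE : 0 ≤ E) (p a : ℝ) :
    tangentGaussian E p a (Ioi a) = ENNReal.ofReal (E * millsRatio p) := by
  rw [tangentGaussian, withDensity_apply _ measurableSet_Ioi, ← ofReal_integral_eq_lintegral_ofReal,
    integral_const_mul, integral_Ioi_millsKernel_sub]
  · exact (((integrable_millsKernel p).comp_sub_right a).const_mul E).integrableOn
  · exact ae_of_all _ fun x => mul_nonneg hE (millsKernel_pos _ _).le

lemma tangentGaussian_Iic {E : ℝ} (hE : 0 ≤ E) (p a : ℝ) :
    tangentGaussian E p a (Iic a) = ENNReal.ofReal (E * millsRatio (-p)) := by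
  rw [tangentGaussian, withDensity_apply _ measurableSet_Iic, ← ofReal_integral_eq_lintegral_ofReal,
    integral_const_mul, integral_Iic_millsKernel_sub]
  · exact (((integrable_millsKernel p).comp_sub_right a).const_mul E).integrableOn
  · exact ae_of_all _ fun x => mul_nonneg hE (millsKernel_pos _ _).le

lemma withDensity_indicator_le_tangentGaussian {I : Set ℝ} {ψ : ℝ → ℝ} {p a : ℝ}
    (h : ∀ x ∈ I, ψ a + p * (x - a) + (x - a) ^ 2 / 2 ≤ ψ x) :
    volume.withDensity (I.indicator fun x => ENNReal.ofReal (rexp (-ψ x)))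
      ≤ tangentGaussian (rexp (-ψ a)) p a := by
  refine withDensity_mono (ae_of_all _ fun x => ?_)
  by_cases hx : x ∈ I
  · simp only [indicator_of_mem hx, millsKernel, ← exp_add]
    exact ENNReal.ofReal_le_ofReal (exp_le_exp.2 (by linarith [h x hx]))
  · simp [indicator_of_notMem hx]

lemma withDensity_indicator_inter_self {α : Type*} [MeasurableSpace α] {μ : Measure α}
    {t : Set α} (ht : MeasurableSet t) (f : α → ENNReal) (s : Set α) :
    μ.withDensity (t.indicator f) (s ∩ t) = μ.withDensity (t.indicator f) s := by
  refine measure_inter_conull ?_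
  rw [withDensity_indicator ht]
  exact withDensity_absolutelyContinuous _ _ (by simp [Measure.restrict_apply ht.compl])

lemma gauss_eq_tangentGaussian (a : ℝ) : gauss = tangentGaussian (rexp (-gaussPsi a)) a a := by
  rw [gauss, tangentGaussian]
  congr with x
  simp only [millsKernel, gaussPsi, ← exp_add]
  ring_nf

lemma gauss_eq_gaussianReal : gauss = ProbabilityTheory.gaussianReal 0 1 := by
  rw [ProbabilityTheory.gaussianReal_of_var_ne_zero _ one_ne_zero, gauss,
    ProbabilityTheory.gaussianPDF_def, ProbabilityTheory.gaussianPDFReal_def]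
  congr with x
  have h2π : (0:ℝ) < 2 * π := by positivity
  simp only [NNReal.coe_one, mul_one, sub_zero]
  rw [gaussPsi, neg_add, exp_add, Real.sqrt_eq_rpow, ← Real.rpow_neg h2π.le,
    Real.rpow_def_of_pos h2π]
  ring_nf

instance : IsProbabilityMeasure gauss := gauss_eq_gaussianReal ▸ inferInstance

lemma gauss_Iic_strictMono : StrictMono fun a => gauss (Iic a) := by
  intro a b hab
  have hpos : gauss (Ioc a b) ≠ 0 := fun h => by
    have hvol := ProbabilityTheory.gaussianReal_absolutelyContinuous' 0 one_ne_zero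
      (gauss_eq_gaussianReal ▸ h)
    rw [Real.volume_Ioc, ENNReal.ofReal_eq_zero] at hvol
    linarith
  dsimp only
  rw [← Iic_union_Ioc_eq_Iic hab.le, measure_union (Iic_disjoint_Ioc le_rfl) measurableSet_Ioc]
  exact ENNReal.lt_add_right (measure_ne_top _ _) hpos

lemma measure_Ioi_eq_ofReal_one_sub {μ : Measure ℝ} [IsProbabilityMeasure μ] {a θ : ℝ}
    (hθ : 0 ≤ θ) (h : μ (Iic a) = ENNReal.ofReal θ) : μ (Ioi a) = ENNReal.ofReal (1 - θ) := by
  rw [← compl_Iic, prob_compl_eq_one_sub measurableSet_Iic, h, ENNReal.ofReal_sub _ hθ,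
    ENNReal.ofReal_one]

lemma le_mul_millsRatio_of_le_tangentGaussian {μ : Measure ℝ} [IsProbabilityMeasure μ]
    {θ E p a : ℝ} (hθ : 0 ≤ θ) (hE : 0 ≤ E) (hμ : μ ≤ tangentGaussian E p a)
    (hμθ : μ (Iic a) = ENNReal.ofReal θ) :
    θ ≤ E * millsRatio (-p) ∧ 1 - θ ≤ E * millsRatio p := by
  constructor
  · rw [← ENNReal.ofReal_le_ofReal_iff (mul_nonneg hE (millsRatio_pos _).le), ← hμθ,
      ← tangentGaussian_Iic hE]
    exact hμ _
  · rw [← ENNReal.ofReal_le_ofReal_iff (mul_nonneg hE (millsRatio_pos _).le),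
      ← measure_Ioi_eq_ofReal_one_sub hθ hμθ, ← tangentGaussian_Ioi hE]
    exact hμ _

lemma eq_mul_millsRatio_of_gauss_Iic {θ a : ℝ} (hθ₀ : 0 ≤ θ) (hθ₁ : θ ≤ 1)
    (h : gauss (Iic a) = ENNReal.ofReal θ) :
    θ = rexp (-gaussPsi a) * millsRatio (-a) ∧ 1 - θ = rexp (-gaussPsi a) * millsRatio a := by
  have hg : 0 ≤ rexp (-gaussPsi a) := (exp_pos _).le
  have hIic := tangentGaussian_Iic hg a a
  have hIoi := tangentGaussian_Ioi hg a a
  rw [← gauss_eq_tangentGaussian] at hIic hIoi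
  rw [h, ENNReal.ofReal_eq_ofReal_iff hθ₀ (mul_nonneg hg (millsRatio_pos _).le)] at hIic
  rw [measure_Ioi_eq_ofReal_one_sub hθ₀ h,
    ENNReal.ofReal_eq_ofReal_iff (by linarith) (mul_nonneg hg (millsRatio_pos _).le)] at hIoi
  exact ⟨hIic, hIoi⟩

lemma le_two_mul_of_div_one_add_le {q x : ℝ} (hq : 0 ≤ q) (h : q / (1 + q) ≤ x) (hx : x ≤ 1 / 2) :
    q ≤ 2 * x := by
  rw [div_le_iff₀ (by linarith)] at h
  nlinarith

lemma sub_le_of_mul_millsRatio_le {s s' g E δ D : ℝ} (hg : 0 < g) (hδ : 0 ≤ δ)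
    (hE : E ≤ g + δ) (h : g * millsRatio s ≤ E * millsRatio s')
    (hD : millsRatio s / (g * truncatedFirstMoment s) ≤ D) (hDδ : 2 * D * δ ≤ 1) :
    s' - s ≤ 2 * D * δ := by
  have hc := truncatedFirstMoment_pos s
  have hD₀ : 0 ≤ D := (div_pos (millsRatio_pos s) (mul_pos hg hc)).le.trans hD
  rcases lt_or_ge s' s with hss' | hss'
  · nlinarith
  set q := s' - s
  have hdrop := mul_truncatedFirstMoment_le_millsRatio_sub (sub_nonneg.2 hss') s
  rw [add_sub_cancel] at hdrop
  have hq : 0 ≤ q / (1 + q) := div_nonneg (sub_nonneg.2 hss') (by linarith)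
  -- `g (R(s) - R(s')) ≤ δ R(s') ≤ δ R(s)`
  have hgap : g * (millsRatio s - millsRatio s') ≤ δ * millsRatio s := by
    nlinarith [millsRatio_pos s', mul_nonneg hq hc.le]
  have hratio : q / (1 + q) ≤ D * δ := by
    refine le_trans ?_ (mul_le_mul_of_nonneg_right hD hδ)
    rw [div_mul_eq_mul_div, le_div_iff₀ (mul_pos hg hc)]
    nlinarith
  linarith [le_two_mul_of_div_one_add_le (sub_nonneg.2 hss') hratio (by linarith)]

/-- the estimate `|ψ'_+(a_θ) - a_θ| ≤ C·δ`. -/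
theorem right_derivative_estimate (θ : ℝ) (hθ : θ ∈ Ioo (0:ℝ) 1) :
    ∃ C : ℝ, 0 < C ∧ ∃ δ₀ : ℝ, 0 < δ₀ ∧
      ∀ (δ : ℝ), 0 < δ → δ ≤ δ₀ →
      ∀ (I : Set ℝ) (ψ : ℝ → ℝ) (a : ℝ),
        IsOpen I → Convex ℝ I → a ∈ I →
        gauss (Iic a) = ENNReal.ofReal θ →
        (∀ x ∈ I, ∀ y ∈ I, ∀ t ∈ Ioo (0:ℝ) 1,
          ψ ((1 - t) * x + t * y)
            ≤ (1 - t) * ψ x + t * ψ y - (1 / 2) * (1 - t) * t * |x - y| ^ 2) →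
        IsProbabilityMeasure
          (MeasureTheory.volume.withDensity
            (I.indicator fun x => ENNReal.ofReal (Real.exp (-ψ x)))) →
        (MeasureTheory.volume.withDensity
            (I.indicator fun x => ENNReal.ofReal (Real.exp (-ψ x)))) (Iic a ∩ I)
          = ENNReal.ofReal θ →
        Real.exp (-ψ a) ≤ Real.exp (-gaussPsi a) + δ →
        |derivWithin ψ (Ici a) a - a| ≤ C * δ := by
  obtain ⟨a₀, ha₀⟩ | hθ_not_mem := em (∃ a, gauss (Iic a) = ENNReal.ofReal θ)
  swap
  · exact ⟨1, one_pos, 1, one_pos, fun _ _ _ _ _ a _ _ _ ha => (hθ_not_mem ⟨a, ha⟩).elim⟩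
  set g := rexp (-gaussPsi a₀)
  obtain ⟨hθg, h1θg⟩ := eq_mul_millsRatio_of_gauss_Iic hθ.1.le hθ.2.le ha₀
  set D := max (millsRatio a₀ / (g * truncatedFirstMoment a₀))
    (millsRatio (-a₀) / (g * truncatedFirstMoment (-a₀)))
  have hD : 0 < D := lt_max_of_lt_left <|
    div_pos (millsRatio_pos _) (mul_pos (exp_pos _) (truncatedFirstMoment_pos _))
  refine ⟨2 * D, by positivity, 1 / (2 * D), by positivity, ?_⟩
  intro δ hδ hδ₀ I ψ a hI hIc haI hga hψ hm hmθ hdef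
  obtain rfl : a = a₀ := gauss_Iic_strictMono.injective (hga.trans ha₀.symm)
  have hsupp (x : ℝ) (hx : x ∈ I) :
      ψ a + derivWithin ψ (Ici a) a * (x - a) + (x - a) ^ 2 / 2 ≤ ψ x := by
    have := (strongConvexOn_of_forall_mem_Ioo (m := 1) hIc hψ).add_rightDeriv_mul_sub_add_le
      (hI.interior_eq.symm ▸ haI) hx
    rw [derivWithin_Ioi_eq_Ici] at this
    linarith
  obtain ⟨hθψ, h1θψ⟩ := le_mul_millsRatio_of_le_tangentGaussian hθ.1.le (exp_pos _).le
    (withDensity_indicator_le_tangentGaussian hsupp)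
    (by rwa [withDensity_indicator_inter_self hI.measurableSet] at hmθ)
  have hDδ : 2 * D * δ ≤ 1 := by rwa [le_div_iff₀' (by positivity)] at hδ₀
  rw [abs_sub_le_iff]
  constructor
  · exact sub_le_of_mul_millsRatio_le (exp_pos _) hδ.le hdef (h1θg ▸ h1θψ) (le_max_left _ _) hDδ
  · have := sub_le_of_mul_millsRatio_le (exp_pos _) hδ.le hdef (hθg ▸ hθψ) (le_max_right _ _) hDδ
    linarith
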